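/- The mod 2 Milnor K-theory of Q_2 is isomorphic to F_2[π, ρ, u]/(ρ^3, u^2, π^2, ρu, ρπ, ρ^2 + uπ), where ρ = [−1], π = [2], and u = [5]; in particular K_1^M(Q_2)/2 ≅ (F_2)^3, K_2^M(Q_2)/2 ≅ F_2 generated by ρ^2 = uπ, and K_n^M(Q_2)/2 = 0 for n ≥ 3. -/

import Mathlib

open TensorAlgebra

/-- Steinberg relations together with `2 = 0`, defining mod 2 Milnor K-theory
as a quotient of the tensor algebra (over `ℤ`) on the unit group `Fˣ`. -/
inductive MilnorRel2 (F : Type) [Field F] :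
    TensorAlgebra ℤ (Additive Fˣ) → TensorAlgebra ℤ (Additive Fˣ) → Prop
  | steinberg (u v : Fˣ) (h : (u : F) + (v : F) = 1) :
      MilnorRel2 F (ι ℤ (Additive.ofMul u) * ι ℤ (Additive.ofMul v)) 0
  | two : MilnorRel2 F 2 0

/-- Mod 2 Milnor K-theory `K_*^M(F)/2`. -/
def MilnorK2 (F : Type) [Field F] := RingQuot (MilnorRel2 F)

noncomputable instance (F : Type) [Field F] : Ring (MilnorK2 F) :=
  inferInstanceAs (Ring (RingQuot (MilnorRel2 F)))

/-- The symbol `[a] ∈ K_1^M(F)/2` of a unit `a`. -/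
noncomputable def MilnorK2.symbol {F : Type} [Field F] (a : Fˣ) : MilnorK2 F :=
  RingQuot.mkRingHom (MilnorRel2 F) (ι ℤ (Additive.ofMul a))

/-- The unit of `ℚ_ν` given by a nonzero natural number. -/
noncomputable def padicNatUnit (ν : ℕ) [Fact ν.Prime] (n : ℕ) (hn : n ≠ 0) : ℚ_[ν]ˣ :=
  Units.mk0 (n : ℚ_[ν]) (Nat.cast_ne_zero.mpr hn)

namespace MilnorK2

variable {F : Type} [Field F]

/-- the symbol map as an additive hom -/
noncomputable def symbolAdd (F : Type) [Field F] : Additive Fˣ →+ MilnorK2 F :=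
  ((RingQuot.mkRingHom (MilnorRel2 F) :
      TensorAlgebra ℤ (Additive Fˣ) →+* RingQuot (MilnorRel2 F)).toAddMonoidHom.comp
    (ι ℤ (M := Additive Fˣ)).toAddMonoidHom)

lemma symbolAdd_apply (a : Fˣ) : symbolAdd F (Additive.ofMul a) = symbol a := rfl

lemma two_eq_zero : (2 : MilnorK2 F) = 0 := by
  have h := RingQuot.mkRingHom_rel (MilnorRel2.two (F := F))
  rw [map_ofNat, map_zero] at h
  exact_mod_cast h

lemma add_self (x : MilnorK2 F) : x + x = 0 := by
  have : (2 : MilnorK2 F) * x = 0 := by rw [two_eq_zero, zero_mul]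
  calc x + x = 2 * x := by noncomm_ring
  _ = 0 := this

lemma neg_eq (x : MilnorK2 F) : -x = x := by
  rw [neg_eq_iff_add_eq_zero, add_self]

lemma eq_of_add_eq_zero {x y : MilnorK2 F} (h : x + y = 0) : x = y := by
  have := neg_eq y; rw [add_eq_zero_iff_eq_neg, this] at h; exact h

lemma symbol_mul (a b : Fˣ) : symbol (a * b) = symbol a + symbol b := by
  rw [← symbolAdd_apply, ← symbolAdd_apply, ← symbolAdd_apply, ofMul_mul, map_add]

lemma symbol_one : symbol (1 : Fˣ) = 0 := by
  rw [← symbolAdd_apply, ofMul_one, map_zero]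

lemma symbol_inv (a : Fˣ) : symbol a⁻¹ = symbol a := by
  have := symbol_mul a a⁻¹
  rw [mul_inv_cancel, symbol_one] at this
  exact (eq_of_add_eq_zero this.symm).symm

lemma symbol_zpow (a : Fˣ) (n : ℤ) : symbol (a ^ n) = n • symbol a := by
  rw [← symbolAdd_apply, ofMul_zpow, map_zsmul, symbolAdd_apply]

lemma symbol_sq_mul (a b : Fˣ) : symbol (a * a * b) = symbol b := by
  rw [symbol_mul, symbol_mul, add_assoc, add_comm (symbol a) (symbol b), ← add_assoc,
    add_comm, ← add_assoc, add_self, zero_add]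

lemma steinberg (a b : Fˣ) (h : (a : F) + (b : F) = 1) : symbol a * symbol b = 0 := by
  have h2 := RingQuot.mkRingHom_rel (MilnorRel2.steinberg a b h)
  rw [map_mul, map_zero] at h2
  exact h2

lemma symbol_mul_neg_self (a : Fˣ) : symbol a * symbol (-a) = 0 := by
  by_cases ha : a = 1
  · rw [ha, symbol_one, zero_mul]
  · have h1 : ((1 : F) - (a : F)) ≠ 0 := by
      intro h; exact ha (by ext; exact (sub_eq_zero.mp h).symm)
    have ha' : (a : F) ≠ 0 := a.ne_zero
    have h2 : ((1 : F) - (a : F)⁻¹) ≠ 0 := by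
      intro h
      have h3 : (a : F)⁻¹ = 1 := (sub_eq_zero.mp h).symm
      have h4 : (a : F) = 1 := by
        have := congrArg (fun t => (a : F) * t) h3
        simpa [mul_inv_cancel₀ ha'] using this.symm
      exact h1 (by rw [h4]; ring)
    set b : Fˣ := Units.mk0 _ h1 with hb
    set c : Fˣ := Units.mk0 _ h2 with hc
    have key : -a = b * c⁻¹ := by
      ext
      push_cast [hb, hc, Units.val_mk0]
      rw [← div_eq_mul_inv, eq_div_iff h2]
      field_simp
      ring
    have s1 : symbol a * symbol b = 0 := by
      apply steinberg; simp only [hb, Units.val_mk0]; ring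
    have s2 : symbol a⁻¹ * symbol c = 0 := by
      apply steinberg; simp only [hc, Units.val_mk0]
      rw [Units.val_inv_eq_inv_val]; ring
    rw [key, symbol_mul, symbol_inv, mul_add, s1, zero_add, ← symbol_inv a, s2]

lemma symbol_mul_self (a : Fˣ) : symbol a * symbol a = symbol a * symbol (-1) := by
  have h : (-a : Fˣ) = (-1) * a := by ext; simp
  have := symbol_mul_neg_self a
  rw [h, symbol_mul, mul_add, add_comm] at this
  exact eq_of_add_eq_zero this

lemma symbol_comm (a b : Fˣ) : symbol a * symbol b = symbol b * symbol a := by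
  have h := symbol_mul_self (a * b)
  rw [symbol_mul, add_mul, mul_add, mul_add, symbol_mul_self a, symbol_mul_self b] at h
  apply eq_of_add_eq_zero
  have h2 : (symbol a * symbol b + symbol b * symbol a) +
      (symbol a * symbol (-1) + symbol b * symbol (-1)) =
      0 + (symbol a * symbol (-1) + symbol b * symbol (-1)) := by
    rw [zero_add]
    calc symbol a * symbol b + symbol b * symbol a +
        (symbol a * symbol (-1) + symbol b * symbol (-1))
        = symbol a * symbol (-1) + symbol a * symbol b +
          (symbol b * symbol a + symbol b * symbol (-1)) := by abel
      _ = (symbol a + symbol b) * symbol (-1) := h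
      _ = symbol a * symbol (-1) + symbol b * symbol (-1) := by noncomm_ring
  exact add_right_cancel h2

/-- commutativity of `MilnorK2` -/
lemma mul_comm' (x y : MilnorK2 F) : x * y = y * x := by
  obtain ⟨t, rfl⟩ := RingQuot.mkRingHom_surjective (MilnorRel2 F) x
  obtain ⟨s, rfl⟩ := RingQuot.mkRingHom_surjective (MilnorRel2 F) y
  set mk := RingQuot.mkRingHom (MilnorRel2 F)
  have base : ∀ (m : Additive Fˣ) (s : TensorAlgebra ℤ (Additive Fˣ)),
      Commute (mk (ι ℤ m)) (mk s) := by
    intro m s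
    induction s using TensorAlgebra.induction with
    | algebraMap r =>
        have : mk ((algebraMap ℤ _) r) = (r : MilnorK2 F) := by
          simp [algebraMap_int_eq, map_intCast]
          rfl
        rw [this]
        exact (Int.cast_commute r _).symm
    | ι m' => exact symbol_comm m.toMul m'.toMul
    | mul x y hx hy => rw [map_mul]; exact hx.mul_right hy
    | add x y hx hy => rw [map_add]; exact hx.add_right hy
  induction t using TensorAlgebra.induction with
  | algebraMap r =>
      have : mk ((algebraMap ℤ _) r) = (r : MilnorK2 F) := by
        simp [algebraMap_int_eq, map_intCast]
        rfl
      rw [this]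
      exact Int.cast_commute r _
  | ι m => exact base m s
  | mul x y hx hy => rw [map_mul]; exact (Commute.mul_left hx hy)
  | add x y hx hy => rw [map_add]; exact (Commute.add_left hx hy)

end MilnorK2

namespace P2

open PadicInt

noncomputable def pval (a : ℚ_[2]ˣ) : ℤ := (a : ℚ_[2]).valuation

lemma norm_unit_val (a : ℚ_[2]ˣ) : ‖(a : ℚ_[2])‖ = (2 : ℝ) ^ (-pval a) := by
  have := Padic.norm_eq_zpow_neg_valuation (p := 2) (x := (a : ℚ_[2])) a.ne_zero
  rw [this]; norm_num [pval]

lemma uq_norm (a : ℚ_[2]ˣ) : ‖(a : ℚ_[2]) * (2 : ℚ_[2]) ^ (-pval a)‖ = 1 := by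
  have h2 : ((2 : ℕ) : ℚ_[2]) = (2 : ℚ_[2]) := by norm_num
  have := Padic.norm_p_zpow (p := 2) (-pval a)
  rw [h2] at this
  rw [_root_.norm_mul, this, norm_unit_val]
  push_cast
  rw [← zpow_add₀ (by norm_num : (2:ℝ) ≠ 0)]
  norm_num

noncomputable def upart (a : ℚ_[2]ˣ) : ℤ_[2]ˣ := PadicInt.mkUnits (uq_norm a)

lemma upart_coe (a : ℚ_[2]ˣ) :
    ((upart a : ℤ_[2]) : ℚ_[2]) = (a : ℚ_[2]) * (2 : ℚ_[2]) ^ (-pval a) :=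
  PadicInt.mkUnits_eq _

lemma coe_eq_upart_mul (a : ℚ_[2]ˣ) :
    (a : ℚ_[2]) = ((upart a : ℤ_[2]) : ℚ_[2]) * (2 : ℚ_[2]) ^ (pval a) := by
  rw [upart_coe, mul_assoc, ← zpow_add₀ (by norm_num : (2:ℚ_[2]) ≠ 0)]
  norm_num

noncomputable def m8 (a : ℚ_[2]ˣ) : ZMod (2 ^ 3) := PadicInt.toZModPow 3 (upart a : ℤ_[2])

def e8 (x : ZMod (2 ^ 3)) : ZMod 2 := if x = 3 ∨ x = 7 then 1 else 0
def d8 (x : ZMod (2 ^ 3)) : ZMod 2 := if x = 3 ∨ x = 5 then 1 else 0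

noncomputable def E (a : ℚ_[2]ˣ) : ZMod 2 := e8 (m8 a)
noncomputable def D (a : ℚ_[2]ˣ) : ZMod 2 := d8 (m8 a)
noncomputable def V (a : ℚ_[2]ˣ) : ZMod 2 := (pval a : ZMod 2)

lemma pval_mul (a b : ℚ_[2]ˣ) : pval (a * b) = pval a + pval b := by
  have := Padic.valuation_mul (p := 2) (x := (a : ℚ_[2])) (y := (b : ℚ_[2]))
    a.ne_zero b.ne_zero
  simpa [pval] using this

lemma upart_mul (a b : ℚ_[2]ˣ) : upart (a * b) = upart a * upart b := by
  ext
  apply Subtype.coe_injective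
  push_cast
  rw [upart_coe, upart_coe, upart_coe, pval_mul, Units.val_mul]
  push_cast
  rw [neg_add, zpow_add₀ (by norm_num : (2:ℚ_[2]) ≠ 0)]
  ring

lemma m8_mul (a b : ℚ_[2]ˣ) : m8 (a * b) = m8 a * m8 b := by
  rw [m8, m8, m8, upart_mul]
  push_cast
  rw [map_mul]

lemma isUnit_m8 (a : ℚ_[2]ˣ) : IsUnit (m8 a) := (upart a).isUnit.map (toZModPow 3)

lemma E_mul (a b : ℚ_[2]ˣ) : E (a * b) = E a + E b := by
  have key : ∀ x y : ZMod (2 ^ 3), IsUnit x → IsUnit y → e8 (x * y) = e8 x + e8 y := by decide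
  rw [E, E, E, m8_mul]
  exact key _ _ (isUnit_m8 a) (isUnit_m8 b)

lemma D_mul (a b : ℚ_[2]ˣ) : D (a * b) = D a + D b := by
  have key : ∀ x y : ZMod (2 ^ 3), IsUnit x → IsUnit y → d8 (x * y) = d8 x + d8 y := by decide
  rw [D, D, D, m8_mul]
  exact key _ _ (isUnit_m8 a) (isUnit_m8 b)

lemma V_mul (a b : ℚ_[2]ˣ) : V (a * b) = V a + V b := by
  rw [V, V, V, pval_mul]; push_cast; ring

lemma toZModPow3_eq_iff (x y : ℤ_[2]) :
    PadicInt.toZModPow 3 x = PadicInt.toZModPow 3 y ↔ ‖x - y‖ ≤ (2 : ℝ) ^ (-3 : ℤ) := by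
  have h2 : ((2 : ℕ) : ℝ) = (2 : ℝ) := by norm_num
  rw [show ((2:ℝ)) ^ (-3:ℤ) = ((2:ℕ):ℝ) ^ (-(3:ℕ):ℤ) by rw [h2]; norm_num]
  rw [PadicInt.norm_le_pow_iff_mem_span_pow, ← PadicInt.ker_toZModPow, RingHom.mem_ker,
    map_sub, sub_eq_zero]

lemma exists_unit_sq (w : ℤ_[2]ˣ) (h : PadicInt.toZModPow 3 (w : ℤ_[2]) = 1) :
    ∃ z : ℤ_[2]ˣ, z * z = w := by
  have h1 : ‖(w : ℤ_[2]) - 1‖ ≤ (2 : ℝ) ^ (-3 : ℤ) := by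
    rw [← toZModPow3_eq_iff, map_one]; exact h
  set F : Polynomial ℤ_[2] := Polynomial.X ^ 2 - Polynomial.C (w : ℤ_[2]) with hF
  have heval : F.eval 1 = 1 - (w : ℤ_[2]) := by simp [hF]
  have hderiv : F.derivative.eval 1 = 2 := by
    simp [hF, Polynomial.derivative_sub, Polynomial.derivative_X_pow, one_add_one_eq_two]
  have hnorm2 : ‖(2 : ℤ_[2])‖ = 2⁻¹ := by
    have := PadicInt.norm_p (p := 2); norm_num at this ⊢; exact this
  have hlt : ‖F.eval 1‖ < ‖F.derivative.eval 1‖ ^ 2 := by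
    rw [heval, hderiv, hnorm2]
    calc ‖1 - (w : ℤ_[2])‖ = ‖(w : ℤ_[2]) - 1‖ := by rw [norm_sub_rev]
    _ ≤ (2 : ℝ) ^ (-3 : ℤ) := h1
    _ < 2⁻¹ ^ 2 := by norm_num
  obtain ⟨z, hz, -, -, -⟩ := hensels_lemma hlt
  have hzw : z * z = (w : ℤ_[2]) := by
    have : z ^ 2 - (w : ℤ_[2]) = 0 := by simpa [hF] using hz
    have := sub_eq_zero.mp this
    rw [← this]; ring
  have hznorm : ‖z‖ = 1 := by
    have hw : ‖(w : ℤ_[2])‖ = 1 := PadicInt.norm_units w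
    have h2 : ‖z‖ * ‖z‖ = 1 := by rw [← norm_mul, hzw, hw]
    nlinarith [norm_nonneg z]
  refine ⟨(PadicInt.isUnit_iff.mpr hznorm).unit, ?_⟩
  ext
  push_cast [IsUnit.unit_spec]
  exact hzw


lemma coe_two : ((2 : ℤ_[2]) : ℚ_[2]) = 2 := by
  rw [show (2:ℤ_[2]) = ((2:ℕ):ℤ_[2]) by norm_num, PadicInt.coe_natCast]; norm_num

lemma coe_four : ((4 : ℤ_[2]) : ℚ_[2]) = 4 := by
  rw [show (4:ℤ_[2]) = ((4:ℕ):ℤ_[2]) by norm_num, PadicInt.coe_natCast]; norm_num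

lemma pval_eq_of_norm (a : ℚ_[2]ˣ) (k : ℤ) (h : ‖(a : ℚ_[2])‖ = (2 : ℝ) ^ (-k)) :
    pval a = k := by
  have h2 := norm_unit_val a
  rw [h2] at h
  have := zpow_right_injective₀ (by norm_num : (0:ℝ) < 2) (by norm_num) h
  omega

lemma upart_coe_of_pval_zero {a : ℚ_[2]ˣ} (h : pval a = 0) :
    ((upart a : ℤ_[2]) : ℚ_[2]) = (a : ℚ_[2]) := by
  rw [upart_coe, h]; norm_num

lemma dec1 : ∀ x : ZMod (2 ^ 3), IsUnit x →
    e8 x * e8 (1 - 2 * x) + d8 (1 - 2 * x) = 0 := by decide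
lemma dec2 : ∀ x : ZMod (2 ^ 3), IsUnit x → e8 x * e8 (1 - 4 * x) = 0 := by decide
lemma dec3 : ∀ x y : ZMod (2 ^ 3), IsUnit x → IsUnit y → x + y ≠ 1 := by decide
lemma dec4 : ∀ x : ZMod (2 ^ 3), IsUnit x →
    e8 x * e8 (2 - x) + d8 (2 - x) + d8 x = 0 := by decide
lemma dec5 : ∀ x : ZMod (2 ^ 3), IsUnit x → e8 x * e8 (4 - x) = 0 := by decide
lemma dec6 : ∀ x : ZMod (2 ^ 3), IsUnit x → ∀ v : ZMod 2,
    e8 x * e8 (-x) + v * d8 (-x) + d8 x * v = 0 := by decide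

lemma e8_one : e8 1 = 0 := by decide
lemma d8_one : d8 1 = 0 := by decide

lemma scalar_pos (a b : ℚ_[2]ˣ) (hab : (a : ℚ_[2]) + (b : ℚ_[2]) = 1) (hva : 0 < pval a) :
    E a * E b + V a * D b + D a * V b = 0 := by
  have hAnorm : ‖(a : ℚ_[2])‖ = (2:ℝ) ^ (-pval a) := norm_unit_val a
  have hAlt : ‖(a : ℚ_[2])‖ < 1 := by
    rw [hAnorm]
    calc (2:ℝ) ^ (-pval a) < (2:ℝ) ^ (0:ℤ) :=
      zpow_lt_zpow_right₀ (by norm_num) (by omega)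
    _ = 1 := by norm_num
  have hBeq : (b : ℚ_[2]) = 1 + (-(a : ℚ_[2])) := by rw [← hab]; ring
  have hBnorm : ‖(b : ℚ_[2])‖ = 1 := by
    rw [hBeq, Padic.add_eq_max_of_ne (by rw [norm_one, norm_neg]; exact (ne_of_lt hAlt).symm),
      norm_one, norm_neg]
    exact max_eq_left (le_of_lt hAlt)
  have hvb : pval b = 0 := pval_eq_of_norm b 0 (by rw [hBnorm]; norm_num)
  have hwb : ((upart b : ℤ_[2]) : ℚ_[2]) = (b : ℚ_[2]) := upart_coe_of_pval_zero hvb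
  have hVb : V b = 0 := by rw [V, hvb]; norm_num
  rcases (by omega : pval a = 1 ∨ pval a = 2 ∨ 3 ≤ pval a) with h1 | h2 | h3
  · -- pval a = 1
    have hA : (a : ℚ_[2]) = ((upart a : ℤ_[2]) : ℚ_[2]) * 2 := by
      rw [coe_eq_upart_mul a, h1]; norm_num
    have key : (upart b : ℤ_[2]) = 1 - 2 * (upart a : ℤ_[2]) := by
      apply Subtype.coe_injective
      push_cast [coe_two]
      rw [hwb, hBeq, hA]; ring
    have m8b : m8 b = 1 - 2 * m8 a := by
      rw [m8, m8, key, map_sub, map_one, map_mul, map_ofNat (PadicInt.toZModPow 3) 2]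
    have hVa : V a = 1 := by rw [V, h1]; norm_num
    rw [E, E, D, D, m8b, hVa, hVb]
    have := dec1 (m8 a) (isUnit_m8 a)
    linear_combination this
  · -- pval a = 2
    have hA : (a : ℚ_[2]) = ((upart a : ℤ_[2]) : ℚ_[2]) * 4 := by
      rw [coe_eq_upart_mul a, h2]; norm_num
    have key : (upart b : ℤ_[2]) = 1 - 4 * (upart a : ℤ_[2]) := by
      apply Subtype.coe_injective
      push_cast [coe_four]
      rw [hwb, hBeq, hA]; ring
    have m8b : m8 b = 1 - 4 * m8 a := by
      rw [m8, m8, key, map_sub, map_one, map_mul, map_ofNat (PadicInt.toZModPow 3) 4]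
    have hVa : V a = 0 := by rw [V, h2]; decide
    rw [E, E, D, D, m8b, hVa, hVb]
    have := dec2 (m8 a) (isUnit_m8 a)
    linear_combination this
  · -- 3 ≤ pval a
    have m8b : m8 b = 1 := by
      rw [m8, show (1 : ZMod (2^3)) = PadicInt.toZModPow 3 (1 : ℤ_[2]) by rw [map_one],
        toZModPow3_eq_iff]
      rw [PadicInt.norm_def]
      push_cast
      rw [hwb, hBeq]
      calc ‖1 + -(a:ℚ_[2]) - 1‖ = ‖(a:ℚ_[2])‖ := by rw [show (1:ℚ_[2]) + -(a:ℚ_[2]) - 1 = -(a:ℚ_[2]) by ring, norm_neg]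
      _ ≤ (2:ℝ) ^ (-3:ℤ) := by
          rw [hAnorm]; exact zpow_le_zpow_right₀ (by norm_num) (by omega)
    rw [E, E, D, D, m8b, hVb, e8_one, d8_one]
    ring

lemma steinberg_scalar (a b : ℚ_[2]ˣ) (hab : (a : ℚ_[2]) + (b : ℚ_[2]) = 1) :
    E a * E b + V a * D b + D a * V b = 0 := by
  rcases lt_trichotomy (pval a) 0 with hva | hva | hva
  · -- negative valuation: pval b = pval a
    have hAnorm : ‖(a : ℚ_[2])‖ = (2:ℝ) ^ (-pval a) := norm_unit_val a
    have hAgt : 1 < ‖(a : ℚ_[2])‖ := by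
      rw [hAnorm]
      calc (1:ℝ) = (2:ℝ) ^ (0:ℤ) := by norm_num
      _ < (2:ℝ) ^ (-pval a) := zpow_lt_zpow_right₀ (by norm_num) (by omega)
    have hBeq : (b : ℚ_[2]) = 1 + (-(a : ℚ_[2])) := by rw [← hab]; ring
    have hBnorm : ‖(b : ℚ_[2])‖ = ‖(a : ℚ_[2])‖ := by
      rw [hBeq, Padic.add_eq_max_of_ne (by rw [norm_one, norm_neg]; exact (ne_of_lt hAgt)),
        norm_one, norm_neg]
      exact max_eq_right (le_of_lt hAgt)
    have hvb : pval b = pval a := pval_eq_of_norm b (pval a) (by rw [hBnorm, hAnorm])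
    set k : ℕ := (-pval a).toNat with hk
    have hkval : (k : ℤ) = -pval a := Int.toNat_of_nonneg (by omega)
    have key : (upart a : ℤ_[2]) + (upart b : ℤ_[2]) = 2 ^ k := by
      apply Subtype.coe_injective
      show (((upart a : ℤ_[2]) + (upart b : ℤ_[2]) : ℤ_[2]) : ℚ_[2]) =
        (((2:ℤ_[2]) ^ k : ℤ_[2]) : ℚ_[2])
      rw [PadicInt.coe_add, PadicInt.coe_pow, upart_coe, upart_coe, hvb, ← add_mul, hab,
        one_mul, coe_two,
        show (2:ℚ_[2]) ^ k = (2:ℚ_[2]) ^ ((k:ℤ)) from (zpow_natCast _ _).symm, hkval]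
    have m8sum : m8 a + m8 b = (2 : ZMod (2^3)) ^ k := by
      rw [m8, m8, ← map_add, key, map_pow, map_ofNat (PadicInt.toZModPow 3) 2]
    rcases (by omega : k = 1 ∨ k = 2 ∨ 3 ≤ k) with h1 | h2 | h3
    · have m8b : m8 b = 2 - m8 a := by rw [h1] at m8sum; linear_combination m8sum
      have hVa : V a = 1 := by
        rw [V, show pval a = -1 by omega]
        decide
      have hVb : V b = 1 := by rw [V, hvb, show pval a = -1 by omega]; decide
      rw [E, E, D, D, m8b, hVa, hVb]
      have := dec4 (m8 a) (isUnit_m8 a)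
      linear_combination this
    · have m8b : m8 b = 4 - m8 a := by
        rw [h2] at m8sum; linear_combination m8sum
      have hVa : V a = 0 := by rw [V, show pval a = -2 by omega]; decide
      have hVb : V b = 0 := by rw [V, hvb, show pval a = -2 by omega]; decide
      rw [E, E, D, D, m8b, hVa, hVb]
      have := dec5 (m8 a) (isUnit_m8 a)
      linear_combination this
    · have hzero : (2 : ZMod (2^3)) ^ k = 0 := by
        have : (2 : ZMod (2^3)) ^ k = (2:ZMod (2^3))^3 * 2 ^ (k - 3) := by
          rw [← pow_add]; congr 1; omega
        rw [this, show ((2:ZMod (2^3)))^3 = 0 by decide, zero_mul]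
      have m8b : m8 b = -m8 a := by rw [hzero] at m8sum; linear_combination m8sum
      have hVb : V b = V a := by rw [V, V, hvb]
      rw [E, E, D, D, m8b, hVb]
      have := dec6 (m8 a) (isUnit_m8 a) (V a)
      linear_combination this
  · -- pval a = 0
    rcases lt_trichotomy (pval b) 0 with hvb | hvb | hvb
    · exfalso
      have hBnorm : ‖(b : ℚ_[2])‖ = (2:ℝ) ^ (-pval b) := norm_unit_val b
      have hBgt : 1 < ‖(b : ℚ_[2])‖ := by
        rw [hBnorm]
        calc (1:ℝ) = (2:ℝ) ^ (0:ℤ) := by norm_num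
        _ < (2:ℝ) ^ (-pval b) := zpow_lt_zpow_right₀ (by norm_num) (by omega)
      have hAnorm : ‖(a : ℚ_[2])‖ = 1 := by rw [norm_unit_val, hva]; norm_num
      have := Padic.add_eq_max_of_ne
        (q := (a : ℚ_[2])) (r := (b : ℚ_[2])) (by rw [hAnorm]; exact (ne_of_lt hBgt))
      rw [hab, norm_one, hAnorm, max_eq_right (le_of_lt hBgt)] at this
      exact (ne_of_lt hBgt) this
    · exfalso
      have hwa := upart_coe_of_pval_zero hva
      have hwb := upart_coe_of_pval_zero hvb
      have key : (upart a : ℤ_[2]) + (upart b : ℤ_[2]) = 1 := by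
        apply Subtype.coe_injective
        push_cast
        rw [hwa, hwb, hab]
      have : m8 a + m8 b = 1 := by
        rw [m8, m8, ← map_add, key, map_one]
      exact dec3 (m8 a) (m8 b) (isUnit_m8 a) (isUnit_m8 b) this
    · have := scalar_pos b a (by rw [← hab]; ring) hvb
      linear_combination this
  · exact scalar_pos a b hab hva

end P2

open MvPolynomial

namespace RqSide

abbrev MvP := MvPolynomial (Fin 3) (ZMod 2)

noncomputable abbrev Iq : Ideal MvP :=
  Ideal.span {(X 0 : MvP) ^ 3, (X 2) ^ 2, (X 1) ^ 2, X 0 * X 2, X 0 * X 1,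
    (X 0) ^ 2 + X 2 * X 1}

abbrev Rq := MvP ⧸ Iq

noncomputable def rr : Rq := Ideal.Quotient.mk _ (X 0)
noncomputable def rp : Rq := Ideal.Quotient.mk _ (X 1)
noncomputable def ru : Rq := Ideal.Quotient.mk _ (X 2)

lemma Rq_two : (2 : Rq) = 0 := by
  have h1 : ((2:ℕ) : Rq) = ((Ideal.Quotient.mk Iq) ((2:ℕ) : MvP)) := (map_natCast _ 2).symm
  have h2 : ((2:ℕ) : MvP) = (C ((2:ℕ) : ZMod 2) : MvP) := (map_natCast (C : ZMod 2 →+* MvP) 2).symm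
  have h3 : ((2:ℕ) : ZMod 2) = 0 := by decide
  rw [show (2:Rq) = ((2:ℕ):Rq) by norm_num, h1, h2, h3, map_zero, map_zero]

lemma Rq_char2 (r : Rq) : r + r = 0 := by
  have : r + r = 2 * r := by ring
  rw [this, Rq_two, zero_mul]

lemma mk_eq_zero_of_mem {f : MvP} (h : f ∈ Iq) : Ideal.Quotient.mk Iq f = 0 :=
  Ideal.Quotient.eq_zero_iff_mem.mpr h

lemma rel_rp : rr * rp = 0 := by
  rw [rr, rp, ← map_mul]
  exact mk_eq_zero_of_mem (Ideal.subset_span (by simp))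

lemma rel_ru : rr * ru = 0 := by
  rw [rr, ru, ← map_mul]
  exact mk_eq_zero_of_mem (Ideal.subset_span (by simp))

lemma rel_pp : rp * rp = 0 := by
  rw [rp, ← map_mul, ← sq]
  exact mk_eq_zero_of_mem (Ideal.subset_span (by simp))

lemma rel_uu : ru * ru = 0 := by
  rw [ru, ← map_mul, ← sq]
  exact mk_eq_zero_of_mem (Ideal.subset_span (by simp))

lemma rel_rr : rr * rr = ru * rp := by
  have h : rr * rr + ru * rp = 0 := by
    rw [rr, ru, rp, ← map_mul, ← map_mul, ← map_add, ← sq]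
    exact mk_eq_zero_of_mem (Ideal.subset_span (by simp))
  have := Rq_char2 (ru * rp)
  calc rr * rr = rr * rr + (ru * rp + ru * rp) := by rw [this, add_zero]
  _ = (rr * rr + ru * rp) + ru * rp := by ring
  _ = ru * rp := by rw [h, zero_add]

/-- coefficient functional detecting `X0^2` mod the ideal -/
noncomputable def cf (f : MvP) : ZMod 2 :=
  coeff (Finsupp.single 0 2) f + coeff (Finsupp.single 1 1 + Finsupp.single 2 1) f

lemma cf_add (f g : MvP) : cf (f + g) = cf f + cf g := by
  simp [cf, coeff_add]; ring

lemma cf_X0cube (h : MvP) : cf (h * (X 0) ^ 3) = 0 := by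
  rw [cf, X_pow_eq_monomial, coeff_mul_monomial', coeff_mul_monomial', if_neg, if_neg, add_zero]
  · intro hle
    have := hle 0
    simp [Finsupp.single_apply] at this
  · intro hle
    have := hle 0
    simp [Finsupp.single_apply] at this

lemma cf_X2sq (h : MvP) : cf (h * (X 2) ^ 2) = 0 := by
  rw [cf, X_pow_eq_monomial, coeff_mul_monomial', coeff_mul_monomial', if_neg, if_neg, add_zero]
  · intro hle
    have := hle 2
    simp [Finsupp.single_apply] at this
  · intro hle
    have := hle 2
    simp [Finsupp.single_apply] at this

lemma cf_X1sq (h : MvP) : cf (h * (X 1) ^ 2) = 0 := by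
  rw [cf, X_pow_eq_monomial, coeff_mul_monomial', coeff_mul_monomial', if_neg, if_neg, add_zero]
  · intro hle
    have := hle 1
    simp [Finsupp.single_apply] at this
  · intro hle
    have := hle 1
    simp [Finsupp.single_apply] at this

lemma X_mul_X_monomial (i j : Fin 3) :
    (X i : MvP) * X j = monomial (Finsupp.single i 1 + Finsupp.single j 1) 1 := by
  rw [X, X, monomial_mul, one_mul]

lemma cf_X0X2 (h : MvP) : cf (h * (X 0 * X 2)) = 0 := by
  rw [cf, X_mul_X_monomial, coeff_mul_monomial', coeff_mul_monomial', if_neg, if_neg, add_zero]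
  · intro hle
    have := hle 0
    simp [Finsupp.single_apply] at this
  · intro hle
    have := hle 2
    simp [Finsupp.single_apply] at this

lemma cf_X0X1 (h : MvP) : cf (h * (X 0 * X 1)) = 0 := by
  rw [cf, X_mul_X_monomial, coeff_mul_monomial', coeff_mul_monomial', if_neg, if_neg, add_zero]
  · intro hle
    have := hle 0
    simp [Finsupp.single_apply] at this
  · intro hle
    have := hle 1
    simp [Finsupp.single_apply] at this

lemma cf_mixed (h : MvP) : cf (h * ((X 0) ^ 2 + X 2 * X 1)) = 0 := by
  have heq : (Finsupp.single (2:Fin 3) 1 + Finsupp.single 1 1)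
      = (Finsupp.single (1:Fin 3) 1 + Finsupp.single 2 1) := add_comm _ _
  have c1 : coeff (Finsupp.single 0 2) (h * (X 0 : MvP) ^ 2) = coeff 0 h := by
    rw [X_pow_eq_monomial, coeff_mul_monomial', if_pos le_rfl, tsub_self, mul_one]
  have c2 : coeff (Finsupp.single 1 1 + Finsupp.single 2 1) (h * (X 0 : MvP) ^ 2) = 0 := by
    rw [X_pow_eq_monomial, coeff_mul_monomial', if_neg]
    intro hle; have := hle 0; simp [Finsupp.single_apply, Finsupp.add_apply] at this
  have c3 : coeff (Finsupp.single 0 2) (h * ((X 2 : MvP) * X 1)) = 0 := by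
    rw [X_mul_X_monomial, coeff_mul_monomial', if_neg]
    intro hle; have := hle 1; simp [Finsupp.single_apply, Finsupp.add_apply] at this
  have c4 : coeff (Finsupp.single 1 1 + Finsupp.single 2 1) (h * ((X 2 : MvP) * X 1))
      = coeff 0 h := by
    rw [X_mul_X_monomial, heq, coeff_mul_monomial', if_pos le_rfl, tsub_self, mul_one]
  rw [mul_add, cf_add, cf, cf, c1, c2, c3, c4, add_zero, zero_add, ← two_mul,
    show ((2 : ZMod 2)) = 0 from by decide, zero_mul]

lemma X0sq_not_mem : (X 0 : MvP) ^ 2 ∉ Iq := by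
  intro hmem
  have hcf : cf ((X 0 : MvP) ^ 2) = 1 := by
    rw [cf, X_pow_eq_monomial, coeff_monomial, coeff_monomial, if_pos rfl, if_neg]
    · norm_num
    · intro heq
      have := DFunLike.congr_fun heq 0
      simp [Finsupp.single_apply] at this
  have hz : cf ((X 0 : MvP) ^ 2) = 0 := by
    rw [Iq, show ({(X 0 : MvP) ^ 3, (X 2) ^ 2, (X 1) ^ 2, X 0 * X 2, X 0 * X 1,
      (X 0) ^ 2 + X 2 * X 1} : Set MvP) =
      insert ((X 0 : MvP) ^ 3) (insert ((X 2 : MvP) ^ 2) (insert ((X 1 : MvP) ^ 2)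
        (insert ((X 0 : MvP) * X 2) (insert ((X 0 : MvP) * X 1)
          ({(X 0 : MvP) ^ 2 + X 2 * X 1} : Set MvP))))) from rfl] at hmem
    rw [Ideal.mem_span_insert] at hmem
    obtain ⟨a1, z1, hz1, he1⟩ := hmem
    rw [Ideal.mem_span_insert] at hz1
    obtain ⟨a2, z2, hz2, he2⟩ := hz1
    rw [Ideal.mem_span_insert] at hz2
    obtain ⟨a3, z3, hz3, he3⟩ := hz2
    rw [Ideal.mem_span_insert] at hz3
    obtain ⟨a4, z4, hz4, he4⟩ := hz3
    rw [Ideal.mem_span_insert] at hz4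
    obtain ⟨a5, z5, hz5, he5⟩ := hz4
    rw [Ideal.mem_span_singleton'] at hz5
    obtain ⟨a6, he6⟩ := hz5
    rw [he1, cf_add, cf_X0cube, zero_add, he2, cf_add, cf_X2sq, zero_add, he3, cf_add,
      cf_X1sq, zero_add, he4, cf_add, cf_X0X2, zero_add, he5, cf_add, cf_X0X1, zero_add,
      ← he6, cf_mixed]
  rw [hcf] at hz
  exact one_ne_zero hz

lemma rurp_ne_zero : ru * rp ≠ 0 := by
  intro h
  rw [ru, rp, ← map_mul] at h
  have h2 : rr * rr = 0 := by rw [rel_rr]; rw [ru, rp, ← map_mul]; exact h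
  rw [rr, ← map_mul, ← sq] at h2
  exact X0sq_not_mem (Ideal.Quotient.eq_zero_iff_mem.mp h2)

end RqSide

section CharTwoHelpers

/-- the unique ring hom from `ZMod 2` to a ring where `2 = 0` -/
noncomputable def zmod2Hom {S : Type*} [Ring S] (h2 : (2:S) = 0) : ZMod 2 →+* S where
  toFun x := (x.val : S)
  map_one' := by norm_num [ZMod.val_one]
  map_mul' x y := by
    have h : ∀ z : ZMod 2, z = 0 ∨ z = 1 := by decide
    rcases h x with rfl | rfl <;> rcases h y with rfl | rfl <;>
      simp only [zero_mul, mul_zero, one_mul, mul_one, ZMod.val_zero, ZMod.val_one,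
        Nat.cast_zero, Nat.cast_one]
  map_zero' := by simp
  map_add' x y := by
    have h : ∀ z : ZMod 2, z = 0 ∨ z = 1 := by decide
    rcases h x with rfl | rfl <;> rcases h y with rfl | rfl <;>
      simp only [add_zero, zero_add, ZMod.val_zero, ZMod.val_one, Nat.cast_zero, Nat.cast_one]
    rw [show ((1:ZMod 2) + 1) = 0 from by decide, ZMod.val_zero, Nat.cast_zero, ← h2,
      one_add_one_eq_two]

lemma val2_mul : ∀ x y : ZMod 2, (x * y).val = x.val * y.val := by decide

lemma val2_add_smul {S : Type*} [AddCommMonoid S] {r : S} (hr : r + r = 0) (x y : ZMod 2) :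
    (x + y).val • r = x.val • r + y.val • r := by
  have h : ∀ z : ZMod 2, z = 0 ∨ z = 1 := by decide
  rcases h x with rfl | rfl <;> rcases h y with rfl | rfl <;>
    simp [ZMod.val_one, show ((1:ZMod 2) + 1) = 0 by decide]
  rw [hr]

lemma zsmul_char2 {S : Type*} [AddCommGroup S] {r : S} (hr : r + r = 0) (n : ℤ) :
    n • r = ((n : ZMod 2)).val • r := by
  rcases Int.even_or_odd n with ⟨m, hm⟩ | ⟨m, hm⟩
  · have h0 : ((n : ZMod 2)) = 0 := by
      rw [ZMod.intCast_zmod_eq_zero_iff_dvd]; omega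
    rw [h0, ZMod.val_zero, zero_smul, hm, add_zsmul, ← zsmul_add, hr, smul_zero]
  · have h1 : ((n : ZMod 2)) = 1 := by
      have hne : ((n : ZMod 2)) ≠ 0 := by
        rw [Ne, ZMod.intCast_zmod_eq_zero_iff_dvd]; omega
      have h : ∀ z : ZMod 2, z = 0 ∨ z = 1 := by decide
      rcases h ((n : ZMod 2)) with h' | h'
      · exact absurd h' hne
      · exact h'
    rw [h1, ZMod.val_one, one_smul, hm, add_zsmul, two_mul, add_zsmul, ← zsmul_add, hr,
      smul_zero, zero_add, one_zsmul]

/-- key product expansion in a ring with the quadratic-form relations -/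
lemma expand_product {S : Type*} [Ring S] (hS : ∀ r : S, r + r = 0) (x y z : S)
    (hxx : x * x = z * y) (hyy : y * y = 0) (hzz : z * z = 0) (hxy : x * y = 0)
    (hyx : y * x = 0) (hxz : x * z = 0) (hzx : z * x = 0) (hyz : y * z = z * y)
    (ea va da eb vb db : ZMod 2) :
    (ea.val • x + va.val • y + da.val • z) * (eb.val • x + vb.val • y + db.val • z) =
      (ea * eb + va * db + da * vb).val • (z * y) := by
  rw [add_mul, add_mul, mul_add, mul_add, mul_add, mul_add, mul_add, mul_add]
  simp only [smul_mul_assoc, mul_smul_comm, smul_smul, hxx, hyy, hzz, hxy, hyx, hxz, hzx, hyz,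
    smul_zero, add_zero, zero_add]
  rw [← val2_mul, ← val2_mul, ← val2_mul]
  rw [val2_add_smul (hS (z*y)), val2_add_smul (hS (z*y)),
    mul_comm eb ea, mul_comm db va, mul_comm vb da]

end CharTwoHelpers

namespace Final

open MilnorK2 P2 PadicInt

noncomputable def u2 : ℚ_[2]ˣ := padicNatUnit 2 2 two_ne_zero
noncomputable def u5 : ℚ_[2]ˣ := padicNatUnit 2 5 (by norm_num)

lemma hcoe2 : (u2 : ℚ_[2]) = 2 := by
  show ((2:ℕ) : ℚ_[2]) = 2; norm_num

lemma hcoe5 : (u5 : ℚ_[2]) = 5 := by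
  show ((5:ℕ) : ℚ_[2]) = 5; norm_num

lemma hcoem1 : ((-1 : ℚ_[2]ˣ) : ℚ_[2]) = -1 := by
  rw [Units.val_neg, Units.val_one]

lemma two_ne_zero' : (2 : ℚ_[2]) ≠ 0 := two_ne_zero
lemma five_ne_zero' : (5 : ℚ_[2]) ≠ 0 := by
  have : ((5:ℕ) : ℚ_[2]) ≠ 0 := Nat.cast_ne_zero.mpr (by norm_num)
  exact_mod_cast this

lemma mrel_pp : symbol u2 * symbol u2 = 0 := by
  have h := steinberg (u2⁻¹) (u2⁻¹) (by
    rw [Units.val_inv_eq_inv_val, hcoe2, ← two_mul, mul_inv_cancel₀ two_ne_zero'])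
  rwa [symbol_inv] at h

lemma mrel_uu : symbol u5 * symbol u5 = 0 := by
  have h := steinberg (u5⁻¹) (u2 * u2 * u5⁻¹) (by
    rw [Units.val_inv_eq_inv_val, Units.val_mul, Units.val_mul, Units.val_inv_eq_inv_val,
      hcoe2, hcoe5]
    field_simp
    norm_num)
  rwa [symbol_sq_mul, symbol_inv] at h

lemma mrel_rp : symbol (-1 : ℚ_[2]ˣ) * symbol u2 = 0 := by
  exact steinberg _ _ (by rw [hcoem1, hcoe2]; ring)

lemma mrel_ru : symbol (-1 : ℚ_[2]ˣ) * symbol u5 = 0 := by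
  have key : (-(u2 * u2) : ℚ_[2]ˣ) = u2 * u2 * (-1) := by
    ext; push_cast [hcoe2]; ring
  have h := steinberg (-(u2 * u2)) u5 (by
    rw [Units.val_neg, Units.val_mul, hcoe2, hcoe5]; ring)
  rwa [key, symbol_sq_mul] at h

/-- the map from units of `ℤ_[2]` -/
noncomputable def Um : ℤ_[2]ˣ →* ℚ_[2]ˣ := Units.map (PadicInt.Coe.ringHom (p := 2)).toMonoidHom

lemma Um_coe (x : ℤ_[2]ˣ) : ((Um x : ℚ_[2]ˣ) : ℚ_[2]) = ((x : ℤ_[2]) : ℚ_[2]) := rfl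

lemma isUnit_intCast (k : ℤ) (hk : ¬ ((2:ℤ) ∣ k)) : IsUnit ((k : ℤ_[2])) := by
  rw [PadicInt.isUnit_iff]
  have hle : ‖((k : ℤ_[2]))‖ ≤ 1 := PadicInt.norm_le_one _
  have hlt : ¬ (‖((k : ℤ_[2]))‖ < 1) := by
    rw [PadicInt.norm_int_lt_one_iff_dvd]
    exact_mod_cast hk
  linarith [lt_or_eq_of_le hle]

lemma symbol_sq_unit (z : ℤ_[2]ˣ) : symbol (Um z) + symbol (Um z) = 0 :=
  MilnorK2.add_self _

lemma hcases8 : ∀ t : ZMod (2^3), IsUnit t → t = 1 ∨ t = 3 ∨ t = 5 ∨ t = 7 := by decide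

noncomputable def n5u : ℤ_[2]ˣ := (isUnit_intCast 5 (by norm_num)).unit

lemma n5u_coe : (n5u : ℤ_[2]) = ((5:ℤ) : ℤ_[2]) := IsUnit.unit_spec _

lemma Um_n5u : Um n5u = u5 := by
  ext
  rw [Um_coe, n5u_coe, hcoe5]
  norm_cast

lemma Um_neg (x : ℤ_[2]ˣ) : Um (-x) = -1 * Um x := by
  ext
  rw [Units.val_mul, hcoem1, Um_coe, Um_coe, Units.val_neg, PadicInt.coe_neg]
  ring

lemma symbol_um_sq {x : ℤ_[2]ˣ} (z : ℤ_[2]ˣ) (hz : z * z = x) : symbol (Um x) = 0 := by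
  rw [← hz, map_mul, symbol_mul]
  exact MilnorK2.add_self _

lemma symbol_upart (x : ℤ_[2]ˣ) :
    symbol (Um x) = (e8 (PadicInt.toZModPow 3 (x : ℤ_[2]))).val • symbol (-1 : ℚ_[2]ˣ)
      + (d8 (PadicInt.toZModPow 3 (x : ℤ_[2]))).val • symbol u5 := by
  have hu : IsUnit (PadicInt.toZModPow 3 (x : ℤ_[2])) := x.isUnit.map _
  rcases hcases8 _ hu with h | h | h | h <;> rw [h]
  · -- square
    obtain ⟨z, hz⟩ := exists_unit_sq x h
    rw [symbol_um_sq z hz]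
    rw [show e8 1 = 0 from by decide, show d8 1 = 0 from by decide]
    simp
  · -- t = 3 : (-5)*x ≡ 1
    have hmul : PadicInt.toZModPow 3 ((((-n5u) * x : ℤ_[2]ˣ)) : ℤ_[2]) = 1 := by
      have hc : ((((-n5u) * x : ℤ_[2]ˣ)) : ℤ_[2]) = -(5:ℤ_[2]) * (x : ℤ_[2]) := by
        push_cast [n5u_coe]; ring
      rw [hc, map_mul, map_neg, map_ofNat (PadicInt.toZModPow 3) 5, h]
      decide
    obtain ⟨z, hz⟩ := exists_unit_sq _ hmul
    have h0 := symbol_um_sq z hz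
    rw [map_mul, Um_neg, Um_n5u, symbol_mul, symbol_mul] at h0
    have hsym := MilnorK2.eq_of_add_eq_zero h0
    rw [← hsym, show e8 3 = 1 from by decide, show d8 3 = 1 from by decide,
      ZMod.val_one, one_smul, one_smul]
  · -- t = 5 : 5*x ≡ 1
    have hmul : PadicInt.toZModPow 3 (((n5u * x : ℤ_[2]ˣ)) : ℤ_[2]) = 1 := by
      have hc : (((n5u * x : ℤ_[2]ˣ)) : ℤ_[2]) = (5:ℤ_[2]) * (x : ℤ_[2]) := by
        push_cast [n5u_coe]; ring
      rw [hc, map_mul, map_ofNat (PadicInt.toZModPow 3) 5, h]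
      decide
    obtain ⟨z, hz⟩ := exists_unit_sq _ hmul
    have h0 := symbol_um_sq z hz
    rw [map_mul, Um_n5u, symbol_mul] at h0
    have hsym := MilnorK2.eq_of_add_eq_zero h0
    rw [← hsym, show e8 5 = 0 from by decide, show d8 5 = 1 from by decide,
      ZMod.val_one, ZMod.val_zero, one_smul, zero_smul, zero_add]
  · -- t = 7 : -x ≡ 1
    have hmul : PadicInt.toZModPow 3 (((-x : ℤ_[2]ˣ)) : ℤ_[2]) = 1 := by
      have hc : (((-x : ℤ_[2]ˣ)) : ℤ_[2]) = -(x : ℤ_[2]) := by push_cast; ring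
      rw [hc, map_neg, h]
      decide
    obtain ⟨z, hz⟩ := exists_unit_sq _ hmul
    have h0 := symbol_um_sq z hz
    rw [Um_neg, symbol_mul] at h0
    have hsym := MilnorK2.eq_of_add_eq_zero h0
    rw [← hsym, show e8 7 = 1 from by decide, show d8 7 = 0 from by decide,
      ZMod.val_one, ZMod.val_zero, one_smul, zero_smul, add_zero]

end Final
namespace Final

open MilnorK2 P2 PadicInt

noncomputable def u3 : ℚ_[2]ˣ := Units.mk0 (3 : ℚ_[2]) (by
  have : ((3:ℕ) : ℚ_[2]) ≠ 0 := Nat.cast_ne_zero.mpr (by norm_num)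
  exact_mod_cast this)

lemma hcoe3 : (u3 : ℚ_[2]) = 3 := rfl

lemma symbol_u3 : symbol u3 = symbol (-1 : ℚ_[2]ˣ) + symbol u5 := by
  have h15 : PadicInt.toZModPow 3 (((isUnit_intCast (-15) (by norm_num)).unit : ℤ_[2])) = 1 := by
    rw [IsUnit.unit_spec, map_intCast]
    decide
  obtain ⟨z, hz⟩ := exists_unit_sq _ h15
  have hzc : ((z : ℤ_[2]) : ℚ_[2]) * ((z : ℤ_[2]) : ℚ_[2]) = -15 := by
    have := congrArg (fun t : ℤ_[2]ˣ => (((t : ℤ_[2])) : ℚ_[2])) hz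
    simp only [Units.val_mul, PadicInt.coe_mul, IsUnit.unit_spec] at this
    rw [PadicInt.coe_intCast] at this
    rw [this]
    push_cast
    ring
  have key : u3 = Um z * Um z * ((-1 : ℚ_[2]ˣ) * u5)⁻¹ := by
    ext
    rw [Units.val_mul, Units.val_mul, Units.val_inv_eq_inv_val, Units.val_mul,
      hcoem1, hcoe5, hcoe3, Um_coe, hzc, ← div_eq_mul_inv,
      eq_div_iff (by rw [neg_one_mul]; exact neg_ne_zero.mpr five_ne_zero')]
    norm_num
  rw [key, symbol_sq_mul, symbol_inv, symbol_mul]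

lemma mrel_rr :
    symbol (-1 : ℚ_[2]ˣ) * symbol (-1 : ℚ_[2]ˣ) = symbol u5 * symbol u2 := by
  have h := steinberg ((-1 : ℚ_[2]ˣ) * u2) u3 (by
    rw [Units.val_mul, hcoem1, hcoe2, hcoe3]; ring)
  rw [symbol_mul, symbol_u3, add_mul, mul_add, mul_add] at h
  -- h : ρρ + ρu + (πρ + πu) = 0
  have hpr : symbol u2 * symbol (-1 : ℚ_[2]ˣ) = 0 := by
    rw [symbol_comm]; exact mrel_rp
  rw [mrel_ru, hpr, add_zero, zero_add] at h
  have := MilnorK2.eq_of_add_eq_zero h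
  rw [this, symbol_comm]

lemma m8_eq (a : ℚ_[2]ˣ) (x : ℤ_[2]) (hx : (x : ℚ_[2]) = (a : ℚ_[2]) * 2 ^ (-pval a)) :
    m8 a = PadicInt.toZModPow 3 x := by
  have : (upart a : ℤ_[2]) = x := Subtype.coe_injective (by
    show ((upart a : ℤ_[2]) : ℚ_[2]) = (x : ℚ_[2])
    rw [upart_coe, hx])
  rw [m8, this]

lemma a_eq_upart_mul (a : ℚ_[2]ˣ) : a = Um (upart a) * u2 ^ (pval a) := by
  ext
  rw [Units.val_mul, Um_coe, upart_coe, Units.val_zpow_eq_zpow_val, hcoe2, mul_assoc,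
    ← zpow_add₀ (by norm_num : (2:ℚ_[2]) ≠ 0)]
  norm_num

lemma symbol_eq (a : ℚ_[2]ˣ) :
    symbol a = (E a).val • symbol (-1 : ℚ_[2]ˣ) + (V a).val • symbol u2
      + (D a).val • symbol u5 := by
  have key : symbol a = symbol (Um (upart a)) + pval a • symbol u2 := by
    have h := symbol_mul (Um (upart a)) (u2 ^ (pval a))
    rw [← a_eq_upart_mul a, symbol_zpow] at h
    exact h
  rw [key, symbol_upart, zsmul_char2 (MilnorK2.add_self (symbol u2))]
  rw [E, D, m8]
  show _ = _ + (V a).val • symbol u2 + _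
  rw [V]
  abel

lemma pval_m1 : pval (-1 : ℚ_[2]ˣ) = 0 := by
  apply pval_eq_of_norm _ 0
  rw [hcoem1, norm_neg, norm_one]
  norm_num

lemma m8_m1 : m8 (-1 : ℚ_[2]ˣ) = -1 := by
  rw [m8_eq (-1 : ℚ_[2]ˣ) (-1 : ℤ_[2]) (by
    rw [pval_m1, hcoem1]
    push_cast
    norm_num), map_neg, map_one]

lemma E_m1 : E (-1 : ℚ_[2]ˣ) = 1 := by rw [E, m8_m1]; decide
lemma D_m1 : D (-1 : ℚ_[2]ˣ) = 0 := by rw [D, m8_m1]; decide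
lemma V_m1 : V (-1 : ℚ_[2]ˣ) = 0 := by rw [V, pval_m1]; decide

lemma pval_u2 : pval u2 = 1 := by
  have := Padic.valuation_p (p := 2)
  exact this

lemma m8_u2 : m8 u2 = 1 := by
  rw [m8_eq u2 1 (by
    rw [pval_u2, hcoe2]
    push_cast
    rw [zpow_neg, zpow_one, mul_inv_cancel₀ two_ne_zero']), map_one]

lemma E_u2 : E u2 = 0 := by rw [E, m8_u2]; decide
lemma D_u2 : D u2 = 0 := by rw [D, m8_u2]; decide
lemma V_u2 : V u2 = 1 := by rw [V, pval_u2]; decide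

lemma pval_u5 : pval u5 = 0 := by
  apply pval_eq_of_norm _ 0
  have h1 : ‖((5:ℤ) : ℤ_[2])‖ = 1 := PadicInt.isUnit_iff.mp (isUnit_intCast 5 (by norm_num))
  rw [PadicInt.norm_def, PadicInt.coe_intCast] at h1
  push_cast at h1
  rw [hcoe5, neg_zero, zpow_zero]
  exact h1

lemma m8_u5 : m8 u5 = 5 := by
  rw [m8_eq u5 ((5:ℤ) : ℤ_[2]) (by
    rw [pval_u5, hcoe5, PadicInt.coe_intCast]
    push_cast
    norm_num), map_intCast]
  decide

lemma E_u5 : E u5 = 0 := by rw [E, m8_u5]; decide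
lemma D_u5 : D u5 = 1 := by rw [D, m8_u5]; decide
lemma V_u5 : V u5 = 0 := by rw [V, pval_u5]; decide

end Final
namespace Final

open MilnorK2 P2 PadicInt RqSide MvPolynomial TensorAlgebra

noncomputable def gval (a : ℚ_[2]ˣ) : RqSide.Rq :=
  (E a).val • rr + (V a).val • rp + (D a).val • ru

lemma gval_mul (a b : ℚ_[2]ˣ) : gval (a * b) = gval a + gval b := by
  rw [gval, gval, gval, E_mul, V_mul, D_mul, val2_add_smul (Rq_char2 rr),
    val2_add_smul (Rq_char2 rp), val2_add_smul (Rq_char2 ru)]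
  abel

noncomputable def gfun : Additive (ℚ_[2]ˣ) →+ RqSide.Rq :=
  AddMonoidHom.mk' (fun a => gval a.toMul) (fun a b => gval_mul a.toMul b.toMul)

noncomputable def psi0 : TensorAlgebra ℤ (Additive (ℚ_[2]ˣ)) →ₐ[ℤ] RqSide.Rq :=
  TensorAlgebra.lift ℤ (AddMonoidHom.toIntLinearMap gfun)

lemma psi0_ι (m : Additive (ℚ_[2]ˣ)) :
    psi0 (ι ℤ m) = (E m.toMul).val • rr + (V m.toMul).val • rp + (D m.toMul).val • ru :=
  TensorAlgebra.lift_ι_apply _ _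

lemma hyx' : rp * rr = 0 := by rw [mul_comm]; exact rel_rp
lemma hzx' : ru * rr = 0 := by rw [mul_comm]; exact rel_ru
lemma hyz' : rp * ru = ru * rp := mul_comm _ _

noncomputable def psi : MilnorK2 ℚ_[2] →+* RqSide.Rq :=
  RingQuot.lift ⟨psi0.toRingHom, by
    intro x y r
    cases r with
    | steinberg u v h =>
        show psi0 _ = psi0 0
        rw [map_mul, map_zero, psi0_ι, psi0_ι]
        rw [expand_product Rq_char2 rr rp ru rel_rr rel_pp rel_uu rel_rp hyx' rel_ru hzx' hyz']
        simp only [toMul_ofMul]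
        rw [steinberg_scalar _ _ h, ZMod.val_zero, zero_smul]
    | two =>
        show psi0 2 = psi0 0
        rw [map_zero, map_ofNat, Rq_two]⟩

lemma psi_symbol (a : ℚ_[2]ˣ) :
    psi (symbol a) = (E a).val • rr + (V a).val • rp + (D a).val • ru := by
  show psi (RingQuot.mkRingHom _ (ι ℤ (Additive.ofMul a))) = _
  rw [psi]
  exact (RingQuot.lift_mkRingHom_apply _ _ _).trans (psi0_ι (Additive.ofMul a))

lemma psi_rho : psi (symbol (-1 : ℚ_[2]ˣ)) = rr := by
  rw [psi_symbol, E_m1, V_m1, D_m1, ZMod.val_one, ZMod.val_zero, one_smul, zero_smul,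
    zero_smul, add_zero, add_zero]

lemma psi_pi : psi (symbol u2) = rp := by
  rw [psi_symbol, E_u2, V_u2, D_u2, ZMod.val_one, ZMod.val_zero, one_smul, zero_smul,
    zero_smul, add_zero, zero_add]

lemma psi_u : psi (symbol u5) = ru := by
  rw [psi_symbol, E_u5, V_u5, D_u5, ZMod.val_one, ZMod.val_zero, one_smul, zero_smul,
    zero_smul, zero_add, zero_add]

noncomputable def commM : CommRing (MilnorK2 ℚ_[2]) :=
  { (inferInstance : Ring (MilnorK2 ℚ_[2])) with mul_comm := MilnorK2.mul_comm' }

noncomputable def phi0 : RqSide.MvP →+* MilnorK2 ℚ_[2] :=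
  letI := commM
  (MvPolynomial.eval₂Hom (zmod2Hom MilnorK2.two_eq_zero)
    (fun i => if i = 0 then symbol (-1 : ℚ_[2]ˣ) else if i = 1 then symbol u2 else symbol u5))

lemma phi0_X0 : phi0 (X 0) = symbol (-1 : ℚ_[2]ˣ) := by
  letI := commM
  simp only [phi0]; erw [MvPolynomial.eval₂Hom_X']; simp

lemma phi0_X1 : phi0 (X 1) = symbol u2 := by
  letI := commM
  simp only [phi0]; erw [MvPolynomial.eval₂Hom_X']; simp

lemma phi0_X2 : phi0 (X 2) = symbol u5 := by
  letI := commM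
  simp only [phi0]; erw [MvPolynomial.eval₂Hom_X']; simp

lemma mrel_rrr : symbol (-1 : ℚ_[2]ˣ) * symbol (-1 : ℚ_[2]ˣ) * symbol (-1 : ℚ_[2]ˣ) = 0 := by
  rw [mrel_rr, mul_assoc, symbol_comm u2 (-1 : ℚ_[2]ˣ), mrel_rp, mul_zero]

lemma phi0_kill : ∀ a ∈ RqSide.Iq, phi0 a = 0 := by
  have hker : RqSide.Iq ≤ RingHom.ker phi0 := by
    rw [Ideal.span_le]
    rintro x hx
    simp only [Set.mem_insert_iff, Set.mem_singleton_iff] at hx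
    rcases hx with rfl | rfl | rfl | rfl | rfl | rfl <;>
      simp only [SetLike.mem_coe, RingHom.mem_ker]
    · rw [map_pow, phi0_X0, pow_succ, pow_two]; exact mrel_rrr
    · rw [map_pow, phi0_X2, pow_two]; exact mrel_uu
    · rw [map_pow, phi0_X1, pow_two]; exact mrel_pp
    · rw [map_mul, phi0_X0, phi0_X2]; exact mrel_ru
    · rw [map_mul, phi0_X0, phi0_X1]; exact mrel_rp
    · rw [map_add, map_pow, map_mul, phi0_X0, phi0_X1, phi0_X2, pow_two, mrel_rr]
      exact MilnorK2.add_self _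
  exact fun a ha => RingHom.mem_ker.mp (hker ha)

noncomputable def phi : RqSide.Rq →+* MilnorK2 ℚ_[2] :=
  Ideal.Quotient.lift RqSide.Iq phi0 phi0_kill

lemma phi_mk (f : RqSide.MvP) : phi (Ideal.Quotient.mk RqSide.Iq f) = phi0 f :=
  Ideal.Quotient.lift_mk _ _ _

lemma phi_rr : phi rr = symbol (-1 : ℚ_[2]ˣ) := by rw [rr, phi_mk, phi0_X0]
lemma phi_rp : phi rp = symbol u2 := by rw [rp, phi_mk, phi0_X1]
lemma phi_ru : phi ru = symbol u5 := by rw [ru, phi_mk, phi0_X2]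

lemma comp_h1 : psi.comp phi = RingHom.id RqSide.Rq := by
  apply Ideal.Quotient.ringHom_ext
  apply MvPolynomial.ringHom_ext
  · intro r
    have h : ∀ z : ZMod 2, z = 0 ∨ z = 1 := by decide
    rcases h r with rfl | rfl
    · simp only [RingHom.comp_apply, map_zero]
    · simp only [RingHom.comp_apply, MvPolynomial.C_1, map_one]
  · intro i
    fin_cases i
    · show psi (phi (Ideal.Quotient.mk RqSide.Iq (X 0))) = Ideal.Quotient.mk RqSide.Iq (X 0)
      rw [phi_mk, phi0_X0, psi_rho]; rfl
    · show psi (phi (Ideal.Quotient.mk RqSide.Iq (X 1))) = Ideal.Quotient.mk RqSide.Iq (X 1)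
      rw [phi_mk, phi0_X1, psi_pi]; rfl
    · show psi (phi (Ideal.Quotient.mk RqSide.Iq (X 2))) = Ideal.Quotient.mk RqSide.Iq (X 2)
      rw [phi_mk, phi0_X2, psi_u]; rfl

set_option synthInstance.maxHeartbeats 800000 in
set_option maxHeartbeats 1600000 in
lemma comp_h2 : phi.comp psi = RingHom.id (MilnorK2 ℚ_[2]) := by
  apply RingQuot.ringQuot_ext
  have key : RingHom.toIntAlgHom
        ((phi.comp psi).comp (RingQuot.mkRingHom (MilnorRel2 ℚ_[2])))
      = RingHom.toIntAlgHom ((RingHom.id (MilnorK2 ℚ_[2])).comp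
          (RingQuot.mkRingHom (MilnorRel2 ℚ_[2]))) := by
    apply TensorAlgebra.hom_ext
    apply LinearMap.ext
    intro m
    show phi (psi (RingQuot.mkRingHom _ (ι ℤ m))) = RingQuot.mkRingHom _ (ι ℤ m)
    have hsym : RingQuot.mkRingHom (MilnorRel2 ℚ_[2]) (ι ℤ m) = symbol m.toMul := rfl
    rw [hsym, psi_symbol, map_add, map_add, map_nsmul, map_nsmul, map_nsmul, phi_rr, phi_rp,
      phi_ru]
    exact (symbol_eq m.toMul).symm
  exact RingHom.ext fun x => DFunLike.congr_fun key x

lemma prod_formula (a b : ℚ_[2]ˣ) :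
    symbol a * symbol b
      = (E a * E b + V a * D b + D a * V b).val • (symbol u5 * symbol u2) := by
  rw [symbol_eq a, symbol_eq b]
  exact expand_product MilnorK2.add_self _ _ _ mrel_rr mrel_pp mrel_uu mrel_rp
    (by rw [symbol_comm]; exact mrel_rp) mrel_ru (by rw [symbol_comm]; exact mrel_ru)
    (symbol_comm u2 u5) _ _ _ _ _ _

lemma aux_t1 : symbol u5 * symbol u2 * symbol (-1 : ℚ_[2]ˣ) = 0 := by
  rw [mul_assoc, symbol_comm u2 (-1 : ℚ_[2]ˣ), mrel_rp, mul_zero]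

lemma aux_t2 : symbol u5 * symbol u2 * symbol u2 = 0 := by
  rw [mul_assoc, mrel_pp, mul_zero]

lemma aux_t3 : symbol u5 * symbol u2 * symbol u5 = 0 := by
  rw [mul_assoc, symbol_comm u2 u5, ← mul_assoc, mrel_uu, zero_mul]

end Final

open MvPolynomial in
/-- `K_*^M(ℚ_2)/2 ≅ F_2[π,ρ,u]/(ρ³, u², π², ρu, ρπ, ρ² + uπ)`,
where `ρ = [-1]`, `π = [2]`, `u = [5]` (variables `X 0 = ρ`, `X 1 = π`,
`X 2 = u`); in particular `K_2^M(ℚ_2)/2 ≅ F_2` generated by `ρ² = uπ ≠ 0`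
(every product of two symbols is `0` or `ρ²`), and all triple products of
symbols vanish (`K_n^M(ℚ_2)/2 = 0` for `n ≥ 3`). -/
theorem milnorK2_of_padic_two :
    (∃ φ : (MvPolynomial (Fin 3) (ZMod 2) ⧸
        Ideal.span {(X 0 : MvPolynomial (Fin 3) (ZMod 2)) ^ 3, (X 2) ^ 2,
          (X 1) ^ 2, X 0 * X 2, X 0 * X 1, (X 0) ^ 2 + X 2 * X 1}) ≃+*
            MilnorK2 ℚ_[2],
      φ (Ideal.Quotient.mk _ (X 0)) = MilnorK2.symbol (-1 : ℚ_[2]ˣ) ∧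
      φ (Ideal.Quotient.mk _ (X 1)) =
        MilnorK2.symbol (padicNatUnit 2 2 two_ne_zero) ∧
      φ (Ideal.Quotient.mk _ (X 2)) =
        MilnorK2.symbol (padicNatUnit 2 5 (by norm_num))) ∧
    (MilnorK2.symbol (-1 : ℚ_[2]ˣ) * MilnorK2.symbol (-1 : ℚ_[2]ˣ) =
      MilnorK2.symbol (padicNatUnit 2 5 (by norm_num)) *
        MilnorK2.symbol (padicNatUnit 2 2 two_ne_zero)) ∧
    MilnorK2.symbol (-1 : ℚ_[2]ˣ) * MilnorK2.symbol (-1 : ℚ_[2]ˣ) ≠ 0 ∧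
    (∀ a b : ℚ_[2]ˣ,
      MilnorK2.symbol a * MilnorK2.symbol b = 0 ∨
      MilnorK2.symbol a * MilnorK2.symbol b =
        MilnorK2.symbol (-1 : ℚ_[2]ˣ) * MilnorK2.symbol (-1 : ℚ_[2]ˣ)) ∧
    (∀ a b c : ℚ_[2]ˣ,
      MilnorK2.symbol a * MilnorK2.symbol b * MilnorK2.symbol c = 0) := by
  refine ⟨⟨RingEquiv.ofRingHom Final.phi Final.psi Final.comp_h2 Final.comp_h1,
    ?_, ?_, ?_⟩, ?_, ?_, ?_, ?_⟩
  · exact Final.phi_rr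
  · exact Final.phi_rp
  · exact Final.phi_ru
  · exact Final.mrel_rr
  · intro hcontra
    have h2 := congrArg Final.psi hcontra
    rw [map_mul, Final.psi_rho, map_zero, RqSide.rel_rr] at h2
    exact RqSide.rurp_ne_zero h2
  · intro a b
    have h : ∀ z : ZMod 2, z = 0 ∨ z = 1 := by decide
    rcases h (P2.E a * P2.E b + P2.V a * P2.D b + P2.D a * P2.V b) with h0 | h1
    · left
      rw [Final.prod_formula, h0, ZMod.val_zero, zero_smul]
    · right
      rw [Final.prod_formula, h1, ZMod.val_one, one_smul]
      exact Final.mrel_rr.symm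
  · intro a b c
    rw [Final.prod_formula a b, smul_mul_assoc, Final.symbol_eq c, mul_add, mul_add,
      mul_smul_comm, mul_smul_comm, mul_smul_comm, Final.aux_t1, Final.aux_t2, Final.aux_t3,
      smul_zero, smul_zero, smul_zero, add_zero, add_zero, smul_zero]
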